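/- For every α ∈ (0,1) there exists a constant C = C(α) > 0 such that g_n(α) ≤ C / n^{1-α} for all n ≥ 1. -/

import Mathlib

/-! The sequence `n g_n` satisfies `(n+2) g_{n+2} = 2α g_{n+1} + n g_n`, and the comparison
sequence `2 n^α` is a supersolution: `2α (n+1)^(α-1) + n^α ≤ (n+2)^α`, i.e. the symmetric
difference quotient of `x^α` over `[n, n+2]` dominates its derivative at the midpoint, because that
derivative `α x^(α-1)` is convex. Induction then gives `n g_n ≤ 2 n^α`, so `C = 2` works. -/

open Set

/-- The coefficient sequence `g_n(α)` defined by the recurrence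
`g_0 = 0`, `g_1 = 1`, `g_{n+2} = (2α g_{n+1} + n g_n)/(n+2)`. -/
noncomputable def g (α : ℝ) : ℕ → ℝ
  | 0 => 0
  | 1 => 1
  | (n + 2) => (2 * α * g α (n + 1) + n * g α n) / (n + 2)

open Real

lemma two_mul_rpow_le_rpow_add_add_rpow_sub {p c t : ℝ} (hp : p ≤ 0) (h₁ : 0 < c + t)
    (h₂ : 0 < c - t) : 2 * c ^ p ≤ (c + t) ^ p + (c - t) ^ p := by
  have hc : 0 < c := by linarith
  have hprod : (c ^ p) ^ 2 ≤ (c + t) ^ p * (c - t) ^ p := by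
    rw [← mul_rpow h₁.le h₂.le, sq, ← mul_rpow hc.le hc.le]
    exact rpow_le_rpow_of_nonpos (by positivity) (by nlinarith [sq_nonneg t]) hp
  -- AM-GM: `(a + b)² ≥ 4ab ≥ (2 c^p)²`
  nlinarith [sq_nonneg ((c + t) ^ p - (c - t) ^ p), rpow_nonneg h₁.le p, rpow_nonneg h₂.le p,
    rpow_nonneg hc.le p]

lemma two_mul_mul_mul_rpow_sub_one_le_rpow_add_sub_rpow_sub {α c t : ℝ} (hα₀ : 0 < α)
    (hα₁ : α ≤ 1) (ht : 0 ≤ t) (htc : t ≤ c) :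
    2 * α * t * c ^ (α - 1) ≤ (c + t) ^ α - (c - t) ^ α := by
  set F : ℝ → ℝ := fun s ↦ (c + s) ^ α - (c - s) ^ α - 2 * α * s * c ^ (α - 1)
  have hF_cont : ContinuousOn F (Icc 0 t) := by
    have := continuous_rpow_const hα₀.le
    fun_prop
  have hF_deriv : ∀ s ∈ Ioo 0 t, HasDerivAt F
      (α * ((c + s) ^ (α - 1) + (c - s) ^ (α - 1) - 2 * c ^ (α - 1))) s := by
    rintro s ⟨hs₀, hst⟩
    have hplus := ((hasDerivAt_id' s).const_add c).rpow_const (p := α) (Or.inl (by linarith))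
    have hminus := ((hasDerivAt_id' s).const_sub c).rpow_const (p := α) (Or.inl (by linarith))
    have hlin := ((hasDerivAt_id' s).const_mul (2 * α)).mul_const (c ^ (α - 1))
    exact ((hplus.sub hminus).sub hlin).congr_deriv (by ring)
  have hF_mono : MonotoneOn F (Icc 0 t) := by
    refine monotoneOn_of_hasDerivWithinAt_nonneg (convex_Icc 0 t) hF_cont
      (fun s hs ↦ (hF_deriv s (by rwa [interior_Icc] at hs)).hasDerivWithinAt) fun s hs ↦ ?_
    rw [interior_Icc] at hs
    exact mul_nonneg hα₀.le (sub_nonneg.2 (two_mul_rpow_le_rpow_add_add_rpow_sub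
      (by linarith) (by linarith [hs.1]) (by linarith [hs.2])))
  have := hF_mono ⟨le_rfl, ht⟩ ⟨ht, le_rfl⟩ ht
  simp only [F, add_zero, sub_zero, mul_zero, zero_mul, sub_self] at this
  linarith

lemma g_recurrence (α : ℝ) (n : ℕ) :
    ((n : ℝ) + 2) * g α (n + 2) = 2 * α * g α (n + 1) + n * g α n := by
  rw [g]
  field_simp

lemma mul_g_le (α : ℝ) (hα₀ : 0 < α) (hα₁ : α ≤ 1) (n : ℕ) : n * g α n ≤ 2 * (n : ℝ) ^ α := by
  induction n using Nat.twoStepInduction with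
  | zero => simp [zero_rpow hα₀.ne']
  | one => simp [g]
  | more n ih₀ ih₁ =>
    have hn₁ : (0 : ℝ) < n + 1 := by positivity
    push_cast at ih₁ ⊢
    have hg₁ : g α (n + 1) ≤ 2 * ((n : ℝ) + 1) ^ (α - 1) := by
      rw [rpow_sub_one hn₁.ne', ← mul_div_assoc, le_div_iff₀ hn₁]
      linarith
    have hkey : 2 * α * 1 * ((n : ℝ) + 1) ^ (α - 1) ≤ ((n : ℝ) + 2) ^ α - (n : ℝ) ^ α := by
      convert two_mul_mul_mul_rpow_sub_one_le_rpow_add_sub_rpow_sub hα₀ hα₁ zero_le_one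
        (by linarith : (1 : ℝ) ≤ n + 1) using 3 <;> ring
    rw [g_recurrence]
    linarith [mul_le_mul_of_nonneg_left hg₁ (by positivity : (0 : ℝ) ≤ 2 * α)]

theorem stmt7 (α : ℝ) (hα : α ∈ Set.Ioo (0:ℝ) 1) :
    ∃ C : ℝ, 0 < C ∧ ∀ n : ℕ, 1 ≤ n → g α n ≤ C / (n : ℝ) ^ (1 - α) := by
  obtain ⟨hα₀, hα₁⟩ := hα
  refine ⟨2, two_pos, fun n hn ↦ ?_⟩
  have hn₀ : (0 : ℝ) < n := by exact_mod_cast hn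
  rw [le_div_iff₀ (rpow_pos_of_pos hn₀ _), rpow_sub hn₀, rpow_one, mul_div_assoc',
    div_le_iff₀ (rpow_pos_of_pos hn₀ _), mul_comm]
  exact mul_g_le α hα₀ hα₁.le n
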